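/- Let F be a quadratic map of the plane with coefficients aᵢ, bᵢ such that det DF(x,y) = x² − y for all (x,y) ∈ ℝ², and define α(t) = F(t, t²). Then a₂ = b₂ = 0; α′(t) = (0,0) if and only if t = X₁₃/3 where X₁₃ := a₁b₃ − a₃b₁; and at T = X₁₃/3 one has α₁″(T)α₂‴(T) − α₁‴(T)α₂″(T) = 18 ≠ 0, so the critical image is a curve with exactly one singular point, which is a nondegenerate cusp. -/

import Mathlib

/-!
Writing `pᵢ = (aᵢ, bᵢ)`, the Jacobian determinant is a quadratic polynomial in `x, y` whose
coefficients are the minors `Xᵢⱼ = cross pᵢ pⱼ`, so `det DF = x² − y` fixes six of them. The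
identity `X₁₂ p₀ − X₀₂ p₁ + X₀₁ p₂ = 0` with `X₀₁ = 1/2` then forces `p₂ = 0`, and `α` becomes the
plane cubic `t³A + t²B + tC + D` with `A = p₁`, `B = p₀ + p₄`, `C = p₃`. As `A, B` are independent,
`α'(t) = 0` iff `α'(t) × A = 3t − X₁₃` and `α'(t) × B = (X₁₃² − 9t²)/2` both vanish (the latter
value by a Plücker relation), i.e. iff `t = X₁₃/3`. Finally `α'' × α''' = 12 (B × A) = 18`.
-/

namespace PlaneQuadraticMap

section Cross

variable {R : Type*} [CommRing R]

-- Factor order chosen so that the statement's `a1*b3 - a3*b1` and its final determinant are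
-- literally `cross` terms.
def cross (u v : R × R) : R := u.1 * v.2 - v.1 * u.2

lemma cross_swap (u v : R × R) : cross u v = -cross v u := by
  unfold cross; ring

lemma cross_smul_sub_cross_smul_add_cross_smul (u v w : R × R) :
    cross v w • u - cross u w • v + cross u v • w = 0 := by
  ext <;> simp only [cross, Prod.fst_sub, Prod.snd_sub, Prod.fst_add, Prod.snd_add, Prod.smul_fst,
    Prod.smul_snd, smul_eq_mul, Prod.fst_zero, Prod.snd_zero] <;> ring

lemma cross_mul_cross_sub_cross_mul_cross_add_cross_mul_cross (u v w z : R × R) :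
    cross u v * cross w z - cross u w * cross v z + cross u z * cross v w = 0 := by
  unfold cross; ring

lemma cross_add_left (u v w : R × R) : cross (u + v) w = cross u w + cross v w := by
  unfold cross; simp only [Prod.fst_add, Prod.snd_add]; ring

lemma cross_add_right (u v w : R × R) : cross u (v + w) = cross u v + cross u w := by
  unfold cross; simp only [Prod.fst_add, Prod.snd_add]; ring

@[simp]
lemma cross_self (u : R × R) : cross u u = 0 := by
  unfold cross; ring

@[simp]
lemma cross_zero_left (u : R × R) : cross 0 u = 0 := by
  simp [cross]

lemma eq_zero_of_cross_eq_zero [IsDomain R] {u v w : R × R} (huv : cross u v ≠ 0)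
    (hu : cross w u = 0) (hv : cross w v = 0) : w = 0 := by
  have h := cross_smul_sub_cross_smul_add_cross_smul u v w
  rw [cross_swap v w, cross_swap u w, hu, hv, neg_zero, zero_smul, zero_smul, sub_zero,
    zero_add, smul_eq_zero] at h
  exact h.resolve_left huv

end Cross

lemma coeffs_eq_zero_of_forall_quadratic_eq_zero {K : Type*} [Field K] [CharZero K]
    {c0 c1 c2 c3 c4 c5 : K}
    (h : ∀ x y : K, c0*x^2 + c1*x*y + c2*y^2 + c3*x + c4*y + c5 = 0) :
    c0 = 0 ∧ c1 = 0 ∧ c2 = 0 ∧ c3 = 0 ∧ c4 = 0 ∧ c5 = 0 := by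
  refine ⟨?_, ?_, ?_, ?_, ?_, ?_⟩
  · linear_combination (h 1 0 + h (-1) 0) / 2 - h 0 0
  · linear_combination h 1 1 - (h 1 0 + h (-1) 0) / 2 - (h 0 1 + h 0 (-1)) / 2
      - (h 1 0 - h (-1) 0) / 2 - (h 0 1 - h 0 (-1)) / 2 + h 0 0
  · linear_combination (h 0 1 + h 0 (-1)) / 2 - h 0 0
  · linear_combination (h 1 0 - h (-1) 0) / 2
  · linear_combination (h 0 1 - h 0 (-1)) / 2
  · linear_combination h 0 0

lemma cross_eq_of_jacobian_det {K : Type*} [Field K] [CharZero K] (p0 p1 p2 p3 p4 : K × K)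
    (hdet : ∀ x y : K,
      (2*p0.1*x + p1.1*y + p3.1) * (p1.2*x + 2*p2.2*y + p4.2)
        - (p1.1*x + 2*p2.1*y + p4.1) * (2*p0.2*x + p1.2*y + p3.2) = x^2 - y) :
    cross p0 p1 = 1/2 ∧ cross p0 p2 = 0 ∧ cross p1 p2 = 0 ∧ 2 * cross p0 p4 = cross p1 p3 ∧
      cross p1 p4 - 2 * cross p2 p3 = -1 ∧ cross p3 p4 = 0 := by
  have h := coeffs_eq_zero_of_forall_quadratic_eq_zero (c0 := 2 * cross p0 p1 - 1)
    (c1 := 4 * cross p0 p2) (c2 := 2 * cross p1 p2) (c3 := 2 * cross p0 p4 - cross p1 p3)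
    (c4 := cross p1 p4 - 2 * cross p2 p3 + 1) (c5 := cross p3 p4)
    fun x y => by unfold cross; linear_combination hdet x y
  obtain ⟨h0, h1, h2, h3, h4, h5⟩ := h
  exact ⟨by linear_combination h0 / 2, by linear_combination h1 / 4, by linear_combination h2 / 2,
    by linear_combination h3, by linear_combination h4, h5⟩

lemma cross_add_eq_of_cross_eq {K : Type*} [Field K] [CharZero K] {p0 p1 p3 p4 : K × K}
    (h01 : cross p0 p1 = 1/2) (h04 : 2 * cross p0 p4 = cross p1 p3) (h14 : cross p1 p4 = -1)
    (h34 : cross p3 p4 = 0) :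
    cross (p0 + p4) p1 = 3/2 ∧ cross p3 (p0 + p4) = cross p1 p3 ^ 2 / 2 := by
  have hplucker := cross_mul_cross_sub_cross_mul_cross_add_cross_mul_cross p0 p1 p3 p4
  rw [h01, h14, h34] at hplucker
  rw [cross_add_left, cross_add_right, cross_swap p4 p1, cross_swap p3 p0, h01, h14, h34]
  constructor
  · norm_num
  · linear_combination -hplucker + cross p1 p3 / 2 * h04

section CubicCurve

variable {𝕜 : Type*} [NontriviallyNormedField 𝕜] {E : Type*} [NormedAddCommGroup E]
  [NormedSpace 𝕜 E]

def cubicCurve (A B C D : E) (t : 𝕜) : E := t^3 • A + t^2 • B + t • C + D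

lemma hasDerivAt_cubicCurve (A B C D : E) (t : 𝕜) :
    HasDerivAt (cubicCurve A B C D) (cubicCurve 0 ((3 : 𝕜) • A) ((2 : 𝕜) • B) C t) t := by
  have h := ((((hasDerivAt_pow 3 t).smul_const A).add ((hasDerivAt_pow 2 t).smul_const B)).add
    ((hasDerivAt_id t).smul_const C)).add_const D
  convert h using 1
  · rfl
  · simp [cubicCurve, smul_smul, mul_comm]

lemma deriv_cubicCurve (A B C D : E) :
    deriv (cubicCurve A B C D) = cubicCurve (𝕜 := 𝕜) 0 ((3 : 𝕜) • A) ((2 : 𝕜) • B) C :=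
  funext fun t => (hasDerivAt_cubicCurve A B C D t).deriv

end CubicCurve

section PlaneCubicCurve

variable {𝕜 : Type*} [NontriviallyNormedField 𝕜]

lemma cross_cubicCurve_velocity (A B C : 𝕜 × 𝕜) (t : 𝕜) (w : 𝕜 × 𝕜) :
    cross (cubicCurve 0 ((3 : 𝕜) • A) ((2 : 𝕜) • B) C t) w
      = 3 * t^2 * cross A w + 2 * t * cross B w + cross C w := by
  simp only [cubicCurve, cross, smul_zero, zero_add, Prod.fst_add, Prod.snd_add, Prod.smul_fst,
    Prod.smul_snd, smul_eq_mul]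
  ring

lemma deriv_cubicCurve_eq_zero_iff [CharZero 𝕜] {A B C D : 𝕜 × 𝕜} (hBA : cross B A = 3/2)
    (hCB : cross C B = cross A C ^ 2 / 2) (t : 𝕜) :
    deriv (cubicCurve A B C D) t = 0 ↔ t = cross A C / 3 := by
  have hAB : cross A B = -(3/2) := by rw [cross_swap, hBA]
  have hCA : cross C A = -cross A C := cross_swap C A
  have hvA := cross_cubicCurve_velocity A B C t A
  have hvB := cross_cubicCurve_velocity A B C t B
  rw [hBA, hCA, cross_self] at hvA
  rw [hAB, hCB, cross_self] at hvB
  rw [deriv_cubicCurve]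
  constructor
  · intro hv
    rw [hv, cross_zero_left] at hvA
    linear_combination -hvA / 3
  · rintro rfl
    refine eq_zero_of_cross_eq_zero (u := A) (v := B) (by norm_num [hAB]) ?_ ?_
    · rw [hvA]; ring
    · rw [hvB]; ring

lemma cross_iteratedDeriv_two_three_cubicCurve (A B C D : 𝕜 × 𝕜) (t : 𝕜) :
    cross (iteratedDeriv 2 (cubicCurve A B C D) t) (iteratedDeriv 3 (cubicCurve A B C D) t)
      = 12 * cross B A := by
  simp only [iteratedDeriv_succ, iteratedDeriv_zero, deriv_cubicCurve]
  simp only [cubicCurve, cross, smul_zero, zero_add, Prod.fst_add, Prod.snd_add, Prod.smul_fst,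
    Prod.smul_snd, smul_eq_mul]
  ring

end PlaneCubicCurve

end PlaneQuadraticMap

open PlaneQuadraticMap

/-- if a quadratic map `F` of the plane has Jacobian determinant
`x² − y` (so `J₀` is the parabola `y = x²`), and `α(t) = F(t, t²)` parametrizes `J₁`,
then `a₂ = b₂ = 0`, `α′(t) = 0` iff `t = X₁₃/3`, and at `T = X₁₃/3` one has
`α₁″(T)α₂‴(T) − α₁‴(T)α₂″(T) = 18 ≠ 0`: a single nondegenerate cusp. -/
theorem stmt10 (a0 a1 a2 a3 a4 a5 b0 b1 b2 b3 b4 b5 : ℝ)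
    (hdet : ∀ x y : ℝ,
      (2*a0*x + a1*y + a3) * (b1*x + 2*b2*y + b4)
        - (a1*x + 2*a2*y + a4) * (2*b0*x + b1*y + b3) = x^2 - y)
    (α : ℝ → ℝ × ℝ)
    (hα : α = fun t =>
      (a0*t^2 + a1*t*t^2 + a2*(t^2)^2 + a3*t + a4*t^2 + a5,
       b0*t^2 + b1*t*t^2 + b2*(t^2)^2 + b3*t + b4*t^2 + b5)) :
    a2 = 0 ∧ b2 = 0 ∧
    (∀ t : ℝ, deriv α t = 0 ↔ t = (a1*b3 - a3*b1)/3) ∧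
    ((iteratedDeriv 2 α ((a1*b3 - a3*b1)/3)).1 * (iteratedDeriv 3 α ((a1*b3 - a3*b1)/3)).2
      - (iteratedDeriv 3 α ((a1*b3 - a3*b1)/3)).1 * (iteratedDeriv 2 α ((a1*b3 - a3*b1)/3)).2
      = 18) := by
  obtain ⟨h01, h02, h12, h04, h14, h34⟩ :=
    cross_eq_of_jacobian_det (a0, b0) (a1, b1) (a2, b2) (a3, b3) (a4, b4) hdet
  have hp2 : ((a2, b2) : ℝ × ℝ) = 0 :=
    eq_zero_of_cross_eq_zero (u := (a0, b0)) (v := (a1, b1)) (by rw [h01]; norm_num)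
      (by rw [cross_swap, h02, neg_zero]) (by rw [cross_swap, h12, neg_zero])
  rw [hp2, cross_zero_left, mul_zero, sub_zero] at h14
  obtain ⟨hBA, hCB⟩ := cross_add_eq_of_cross_eq h01 h04 h14 h34
  obtain ⟨rfl, rfl⟩ : a2 = 0 ∧ b2 = 0 := Prod.mk_eq_zero.mp hp2
  have hcubic : α = cubicCurve (a1, b1) ((a0, b0) + (a4, b4)) (a3, b3) (a5, b5) := by
    rw [hα]; funext t; ext <;> simp [cubicCurve] <;> ring
  subst hcubic
  refine ⟨rfl, rfl, deriv_cubicCurve_eq_zero_iff hBA hCB, ?_⟩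
  change cross _ _ = _
  rw [cross_iteratedDeriv_two_three_cubicCurve, hBA]
  norm_num
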